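/- Fix d ∈ ℕ and a, x ∈ ℝ, and define the Gould–Hopper type polynomials g_i^{(d+1)}(x, a, μ) = Σ_{k : (d+1)k ≤ i} (γ_μ(i) / (k! γ_μ(i − (d+1)k))) a^k x^{i−(d+1)k}. Then for every ω ∈ ℝ, the generating relation e^{a ω^{d+1}} e_μ(xω) = Σ_{i=0}^∞ g_i^{(d+1)}(x, a, μ) ω^i / γ_μ(i) holds. -/

import Mathlib

open scoped BigOperators

/-- The Dunkl coefficients γ_μ(i). -/
noncomputable def gammaMu (μ : ℝ) (i : ℕ) : ℝ :=
  if Even i then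
    2 ^ i * (Nat.factorial (i / 2)) *
      Real.Gamma (((i / 2 : ℕ) : ℝ) + μ + 1 / 2) / Real.Gamma (μ + 1 / 2)
  else
    2 ^ i * (Nat.factorial (i / 2)) *
      Real.Gamma (((i / 2 : ℕ) : ℝ) + μ + 3 / 2) / Real.Gamma (μ + 1 / 2)

/-- θ_i = 0 if i is even, 1 if i is odd. -/
noncomputable def thetaFn (i : ℕ) : ℝ := if Even i then 0 else 1

/-- The Dunkl exponential e_μ(x) = Σ x^i / γ_μ(i). -/
noncomputable def dunklExp (μ : ℝ) (x : ℝ) : ℝ := ∑' i : ℕ, x ^ i / gammaMu μ i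

/-- The Dunkl operator (Λ_μ f)(x) = f'(x) + μ (f(x) - f(-x)) / x. -/
noncomputable def dunklOp (μ : ℝ) (f : ℝ → ℝ) (x : ℝ) : ℝ :=
  deriv f x + μ * (f x - f (-x)) / x

/-- Q(t) = Σ c_i t^i / γ_μ(i). -/
noncomputable def Qf (μ : ℝ) (c : ℕ → ℝ) (t : ℝ) : ℝ := ∑' i : ℕ, c i * t ^ i / gammaMu μ i

/-- The Dunkl–Appell polynomials q_i(x) = Σ_{j=0}^i (γ_μ(i)/(γ_μ(j)γ_μ(i-j))) c_{i-j} x^j. -/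
noncomputable def qPoly (μ : ℝ) (c : ℕ → ℝ) (i : ℕ) (x : ℝ) : ℝ :=
  ∑ j ∈ Finset.range (i + 1),
    gammaMu μ i / (gammaMu μ j * gammaMu μ (i - j)) * c (i - j) * x ^ j

/-- The operators K_n^μ(f;x). -/
noncomputable def Kop (μ : ℝ) (c : ℕ → ℝ) (n : ℕ) (f : ℝ → ℝ) (x : ℝ) : ℝ :=
  1 / (Qf μ c 1 * dunklExp μ (n * x)) *
    ∑' i : ℕ, qPoly μ c i (n * x) / gammaMu μ i * f (((i : ℝ) + 2 * μ * thetaFn i) / n)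

/-- Gould–Hopper type polynomials g_i^{(d+1)}(x, a, μ). -/
noncomputable def gouldHopper (d : ℕ) (x a μ : ℝ) (i : ℕ) : ℝ :=
  ∑ k ∈ Finset.range (i / (d + 1) + 1),
    gammaMu μ i / (Nat.factorial k * gammaMu μ (i - (d + 1) * k)) *
      a ^ k * x ^ (i - (d + 1) * k)

/-!
Both sides are products of absolutely convergent series: `exp (a ω^(d+1)) = ∑ₖ (a ω^(d+1))^k / k!`
and `e_μ(xω) = ∑ⱼ (xω)^j / γ_μ(j)`, the latter converging by the ratio test since
`γ_μ(j+1) ≥ j γ_μ(j)`. Multiplying them out and collecting the terms with `(d+1)k + j = i` is a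
Cauchy product in which the first factor only occupies the multiples of `d+1`; the coefficient of
`ω^i / γ_μ(i)` is then `g_i^{(d+1)}(x, a, μ)` by definition.
-/

open Finset Nat

lemma sum_range_extend_mul_eq_sum_range_div {R : Type*} [NonUnitalNonAssocSemiring R]
    (f g : ℕ → R) {n : ℕ} (hn : 0 < n) (i : ℕ) :
    ∑ m ∈ range (i + 1), Function.extend (n * ·) f 0 m * g (i - m) =
      ∑ k ∈ range (i / n + 1), f k * g (i - n * k) := by
  have hinj : Function.Injective (n * ·) := fun _ _ h => Nat.eq_of_mul_eq_mul_left hn h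
  have hmem : ∀ k, k ∈ range (i / n + 1) ↔ n * k ≤ i := fun k => by
    rw [mem_range, Nat.lt_succ_iff, Nat.le_div_iff_mul_le hn, mul_comm]
  symm
  calc ∑ k ∈ range (i / n + 1), f k * g (i - n * k)
      = ∑ m ∈ (range (i / n + 1)).map ⟨_, hinj⟩, Function.extend (n * ·) f 0 m * g (i - m) := by
        simp only [sum_map, Function.Embedding.coeFn_mk, hinj.extend_apply]
    _ = _ := by
        refine sum_subset (fun m hm => ?_) (fun m hmi hm => ?_)
        · obtain ⟨k, hk, rfl⟩ := mem_map.1 hm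
          exact mem_range.2 (Nat.lt_succ_of_le ((hmem k).1 hk))
        · rw [Function.extend_apply' _ _ _ ?_, Pi.zero_apply, zero_mul]
          rintro ⟨k, rfl⟩
          exact hm (mem_map_of_mem _ ((hmem k).2 (by simpa using hmi)))

theorem tsum_mul_tsum_eq_tsum_sum_range_div_of_summable_norm {R : Type*} [NormedRing R]
    [CompleteSpace R] {f g : ℕ → R}
    (hf : Summable fun k => ‖f k‖) (hg : Summable fun j => ‖g j‖) {n : ℕ} (hn : 0 < n) :
    (∑' k, f k) * ∑' j, g j = ∑' i, ∑ k ∈ range (i / n + 1), f k * g (i - n * k) := by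
  have hinj : Function.Injective (n * ·) := fun _ _ h => Nat.eq_of_mul_eq_mul_left hn h
  have hF : Summable fun m => ‖Function.extend (n * ·) f 0 m‖ := by
    have : (fun m => ‖Function.extend (n * ·) f 0 m‖) =
        Function.extend (n * ·) (fun k => ‖f k‖) 0 :=
      funext fun m => (Function.apply_extend norm _ _ m).trans (by simp [Function.comp_def]; rfl)
    rw [this]
    exact (summable_extend_zero hinj).2 hf
  rw [← tsum_extend_zero hinj f, tsum_mul_tsum_eq_tsum_sum_range_of_summable_norm hF hg]
  exact tsum_congr (sum_range_extend_mul_eq_sum_range_div f g hn)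

section GammaMu

variable {μ : ℝ}

lemma gammaMu_pos (hμ : 0 < μ + 1 / 2) (i : ℕ) : 0 < gammaMu μ i := by
  have hi : (0 : ℝ) ≤ ((i / 2 : ℕ) : ℝ) := Nat.cast_nonneg _
  have h₀ := Real.Gamma_pos_of_pos hμ
  unfold gammaMu
  split
  · have := Real.Gamma_pos_of_pos (show 0 < ((i / 2 : ℕ) : ℝ) + μ + 1 / 2 by linarith)
    positivity
  · have := Real.Gamma_pos_of_pos (show 0 < ((i / 2 : ℕ) : ℝ) + μ + 3 / 2 by linarith)
    positivity

lemma gammaMu_succ (hμ : 0 < μ + 1 / 2) (i : ℕ) :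
    gammaMu μ (i + 1) = gammaMu μ i * (if Even i then (i : ℝ) + 2 * μ + 1 else (i : ℝ) + 1) := by
  have h₀ : Real.Gamma (μ + 1 / 2) ≠ 0 := (Real.Gamma_pos_of_pos hμ).ne'
  rcases Nat.even_or_odd i with ⟨m, rfl⟩ | ⟨m, rfl⟩
  · have heven : Even (m + m) := ⟨m, rfl⟩
    have hodd : ¬ Even (m + m + 1) := Nat.not_even_iff_odd.2 ⟨m, by ring⟩
    have hpos : (m : ℝ) + μ + 1 / 2 ≠ 0 := by linarith [(m.cast_nonneg : (0 : ℝ) ≤ m)]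
    have hΓ : Real.Gamma ((m : ℝ) + μ + 3 / 2) =
        ((m : ℝ) + μ + 1 / 2) * Real.Gamma ((m : ℝ) + μ + 1 / 2) := by
      rw [← Real.Gamma_add_one hpos]; ring_nf
    simp only [gammaMu, if_pos heven, if_neg hodd,
      show (m + m) / 2 = m by omega, show (m + m + 1) / 2 = m by omega, hΓ]
    field_simp
    push_cast
    ring
  · have hodd : ¬ Even (2 * m + 1) := Nat.not_even_iff_odd.2 ⟨m, rfl⟩
    have heven : Even (2 * m + 1 + 1) := ⟨m + 1, by ring⟩
    simp only [gammaMu, if_pos heven, if_neg hodd,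
      show (2 * m + 1) / 2 = m by omega, show (2 * m + 1 + 1) / 2 = m + 1 by omega,
      Nat.factorial_succ]
    field_simp
    push_cast
    ring_nf

lemma mul_gammaMu_le_gammaMu_succ (hμ : 0 < μ + 1 / 2) (i : ℕ) :
    i * gammaMu μ i ≤ gammaMu μ (i + 1) := by
  rw [gammaMu_succ hμ, mul_comm]
  exact mul_le_mul_of_nonneg_left (by split_ifs <;> linarith) (gammaMu_pos hμ i).le

lemma summable_norm_pow_div_gammaMu (hμ : 0 < μ + 1 / 2) (y : ℝ) :
    Summable fun i : ℕ => ‖y ^ i / gammaMu μ i‖ := by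
  refine summable_of_ratio_norm_eventually_le (r := 1 / 2) (by norm_num) ?_
  filter_upwards [Filter.eventually_gt_atTop ⌈2 * |y|⌉₊] with i hi
  have hyi : 2 * |y| < i := (Nat.le_ceil _).trans_lt (by exact_mod_cast hi)
  have hi₀ : (0 : ℝ) < i := by linarith [abs_nonneg y]
  have hγ := gammaMu_pos hμ i
  simp only [norm_div, norm_pow, Real.norm_eq_abs, abs_abs, abs_of_pos hγ,
    abs_of_pos (gammaMu_pos hμ (i + 1))]
  calc |y| ^ (i + 1) / gammaMu μ (i + 1)
      ≤ |y| ^ (i + 1) / (i * gammaMu μ i) := by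
        gcongr
        exact mul_gammaMu_le_gammaMu_succ hμ i
    _ = |y| / i * (|y| ^ i / gammaMu μ i) := by field_simp; ring
    _ ≤ 1 / 2 * (|y| ^ i / gammaMu μ i) := by
        gcongr ?_ * _
        rw [div_le_iff₀ hi₀]
        linarith

lemma gouldHopper_mul_pow_div_gammaMu (hμ : 0 < μ + 1 / 2) (d : ℕ) (a x ω : ℝ) (i : ℕ) :
    gouldHopper d x a μ i * ω ^ i / gammaMu μ i =
      ∑ k ∈ range (i / (d + 1) + 1), (a * ω ^ (d + 1)) ^ k / (k ! : ℝ) *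
        ((x * ω) ^ (i - (d + 1) * k) / gammaMu μ (i - (d + 1) * k)) := by
  rw [gouldHopper, sum_mul, sum_div]
  refine sum_congr rfl fun k hk => ?_
  have hki : (d + 1) * k ≤ i := by
    rw [mem_range, Nat.lt_succ_iff, Nat.le_div_iff_mul_le d.succ_pos] at hk
    linarith
  obtain ⟨j, rfl⟩ : ∃ j, i = (d + 1) * k + j := ⟨_, (Nat.add_sub_cancel' hki).symm⟩
  have hγ := (gammaMu_pos hμ ((d + 1) * k + j)).ne'
  have hγj := (gammaMu_pos hμ j).ne'
  rw [Nat.add_sub_cancel_left, pow_add, pow_mul]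
  field_simp
  ring

end GammaMu

/-- generating relation for Gould–Hopper type polynomials. -/
theorem gouldHopper_generating (μ : ℝ) (hμ : μ + 1 / 2 > 0) (d : ℕ) (a x : ℝ) (ω : ℝ) :
    Real.exp (a * ω ^ (d + 1)) * dunklExp μ (x * ω) =
      ∑' i : ℕ, gouldHopper d x a μ i * ω ^ i / gammaMu μ i := by
  have hexp : Real.exp (a * ω ^ (d + 1)) = ∑' k : ℕ, (a * ω ^ (d + 1)) ^ k / (k ! : ℝ) := by
    rw [Real.exp_eq_exp_ℝ, NormedSpace.exp_eq_tsum_div]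
  have hexp_summable : Summable fun k : ℕ => ‖(a * ω ^ (d + 1)) ^ k / (k ! : ℝ)‖ := by
    simpa [norm_div, norm_pow] using Real.summable_pow_div_factorial ‖a * ω ^ (d + 1)‖
  rw [hexp, dunklExp, tsum_mul_tsum_eq_tsum_sum_range_div_of_summable_norm hexp_summable
    (summable_norm_pow_div_gammaMu hμ (x * ω)) d.succ_pos]
  exact tsum_congr fun i => (gouldHopper_mul_pow_div_gammaMu hμ d a x ω i).symm
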